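/- Every quadtree (balanced or not) can be properly colored with 6 colors under corner adjacency; that is, for every quadtree Q there exists a function f : Q → Fin 6 such that f(s) ≠ f(t) whenever s and t are corner-adjacent squares of Q. -/
import Mathlib


/-- A dyadic square `[i/2^k, (i+1)/2^k] × [j/2^k, (j+1)/2^k] ⊆ [0,1]²`,
recorded by its level `k` and coordinates `i, j < 2^k`. -/
structure DyadicSquare where
  k : ℕ
  i : ℕ
  j : ℕ
  hi : i < 2 ^ k
  hj : j < 2 ^ k
deriving DecidableEq

namespace DyadicSquare

/-- The subset of the plane occupied by a dyadic square. -/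
def region (s : DyadicSquare) : Set (ℝ × ℝ) :=
  Set.Icc ((s.i : ℝ) / 2 ^ s.k) (((s.i : ℝ) + 1) / 2 ^ s.k) ×ˢ
    Set.Icc ((s.j : ℝ) / 2 ^ s.k) (((s.j : ℝ) + 1) / 2 ^ s.k)

/-- Two squares are edge-adjacent if they are distinct and their intersection
contains more than one point (a segment of positive length). -/
def EdgeAdj (s t : DyadicSquare) : Prop :=
  s ≠ t ∧ (s.region ∩ t.region).Nontrivial

/-- Two squares are corner-adjacent if they are distinct and their intersection
is nonempty (they share at least a corner point or part of an edge). -/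
def CornerAdj (s t : DyadicSquare) : Prop :=
  s ≠ t ∧ (s.region ∩ t.region).Nonempty

end DyadicSquare

/-- A finite set of dyadic squares has pairwise disjoint interiors. -/
def PairwiseDisjointInteriors (Q : Finset DyadicSquare) : Prop :=
  (Q : Set DyadicSquare).Pairwise fun s t =>
    interior s.region ∩ interior t.region = ∅

/-- A quadtree: a finite set of dyadic squares with pairwise disjoint interiors
whose union is the unit square `[0,1]²`. -/
def IsQuadtree (Q : Finset DyadicSquare) : Prop :=
  PairwiseDisjointInteriors Q ∧
    (⋃ s ∈ Q, s.region) = Set.Icc (0 : ℝ) 1 ×ˢ Set.Icc (0 : ℝ) 1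

/-- A quadtree is balanced if any two edge-adjacent squares have side lengths
(`2^{-k}`) within a factor of two of each other. -/
def IsBalanced (Q : Finset DyadicSquare) : Prop :=
  ∀ s ∈ Q, ∀ t ∈ Q, DyadicSquare.EdgeAdj s t → s.k ≤ t.k + 1 ∧ t.k ≤ s.k + 1

namespace QTC
open DyadicSquare

/-- left x coordinate, as a rational. -/
def X (s : DyadicSquare) : ℚ := (s.i : ℚ) / 2 ^ s.k
/-- bottom y coordinate. -/
def Y (s : DyadicSquare) : ℚ := (s.j : ℚ) / 2 ^ s.k
/-- side length. -/
def W (s : DyadicSquare) : ℚ := 1 / 2 ^ s.k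

lemma W_pos (s : DyadicSquare) : 0 < W s := by
  unfold W; positivity

/-- closures touch -/
def Touch (s t : DyadicSquare) : Prop :=
  X s ≤ X t + W t ∧ X t ≤ X s + W s ∧ Y s ≤ Y t + W t ∧ Y t ≤ Y s + W s

/-- open interiors overlap -/
def Ov (s t : DyadicSquare) : Prop :=
  X s < X t + W t ∧ X t < X s + W s ∧ Y s < Y t + W t ∧ Y t < Y s + W s

instance (s t : DyadicSquare) : Decidable (Touch s t) := by unfold Touch; infer_instance

lemma castX (s : DyadicSquare) : ((X s : ℚ) : ℝ) = (s.i : ℝ) / 2 ^ s.k := by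
  unfold X; push_cast; ring

lemma castXW (s : DyadicSquare) : ((X s + W s : ℚ) : ℝ) = ((s.i : ℝ) + 1) / 2 ^ s.k := by
  unfold X W; push_cast; ring

lemma castY (s : DyadicSquare) : ((Y s : ℚ) : ℝ) = (s.j : ℝ) / 2 ^ s.k := by
  unfold Y; push_cast; ring

lemma castYW (s : DyadicSquare) : ((Y s + W s : ℚ) : ℝ) = ((s.j : ℝ) + 1) / 2 ^ s.k := by
  unfold Y W; push_cast; ring

lemma touch_iff (s t : DyadicSquare) :
    (s.region ∩ t.region).Nonempty ↔ Touch s t := by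
  unfold region Touch
  simp only [Set.prod_inter_prod, Set.prod_nonempty_iff, Set.Icc_inter_Icc,
    Set.nonempty_Icc, sup_le_iff, le_inf_iff, and_assoc]
  rw [← castX s, ← castX t, ← castY s, ← castY t, ← castXW s, ← castXW t,
    ← castYW s, ← castYW t]
  constructor
  · rintro ⟨-, h2, h3, -, -, h6, h7, -⟩
    exact ⟨by exact_mod_cast h3, by exact_mod_cast h2, by exact_mod_cast h7,
      by exact_mod_cast h6⟩
  · rintro ⟨h1, h2, h3, h4⟩
    have ws := W_pos s; have wt := W_pos t
    refine ⟨?_, ?_, ?_, ?_, ?_, ?_, ?_, ?_⟩ <;>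
      exact_mod_cast (by linarith : (_ : ℚ) ≤ _)

lemma ov_iff (s t : DyadicSquare) :
    (interior s.region ∩ interior t.region).Nonempty ↔ Ov s t := by
  unfold region Ov
  simp only [interior_prod_eq, interior_Icc, Set.prod_inter_prod,
    Set.prod_nonempty_iff, Set.Ioo_inter_Ioo, Set.nonempty_Ioo, sup_lt_iff,
    lt_inf_iff, and_assoc]
  rw [← castX s, ← castX t, ← castY s, ← castY t, ← castXW s, ← castXW t,
    ← castYW s, ← castYW t]
  constructor
  · rintro ⟨-, h2, h3, -, -, h6, h7, -⟩
    exact ⟨by exact_mod_cast h3, by exact_mod_cast h2, by exact_mod_cast h7,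
      by exact_mod_cast h6⟩
  · rintro ⟨h1, h2, h3, h4⟩
    have ws := W_pos s; have wt := W_pos t
    refine ⟨?_, ?_, ?_, ?_, ?_, ?_, ?_, ?_⟩ <;>
      exact_mod_cast (by linarith : (_ : ℚ) < _)

end QTC

section Part2
namespace QTC
open DyadicSquare

/-- the (x+y) diagonal position of the bottom-left corner. -/
def Sm (s : DyadicSquare) : ℚ := X s + Y s

lemma no_dyadic_between {q g : ℚ} (n : ℤ) (hq : q = (n : ℚ) * g) (hg : 0 < g)
    (h0 : 0 < q) (h1 : q < g) : False := by
  have hn0 : 0 < (n : ℚ) := by nlinarith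
  have hn1 : (1 : ℤ) ≤ n := by
    have : (0 : ℤ) < n := by exact_mod_cast hn0
    omega
  have : (1 : ℚ) ≤ (n : ℚ) := by exact_mod_cast hn1
  nlinarith

lemma two_pow_split {a K : ℕ} (h : a ≤ K) : (2 : ℚ) ^ K = 2 ^ a * 2 ^ (K - a) := by
  rw [← pow_add]; congr 1; omega

lemma shiftQ (m a K : ℕ) (h : a ≤ K) :
    (m : ℚ) / 2 ^ a = ((m : ℚ) * 2 ^ (K - a)) / 2 ^ K := by
  rw [two_pow_split h]
  rw [mul_comm ((2:ℚ) ^ a) (2 ^ (K - a)), mul_comm ((m : ℚ)) ((2:ℚ) ^ (K - a)),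
    mul_div_mul_left _ _ (by positivity : ((2:ℚ) ^ (K - a)) ≠ 0)]

lemma dyadic_diffX (u t : DyadicSquare) :
    ∃ n : ℤ, X u - X t = (n : ℚ) / 2 ^ (max u.k t.k) := by
  refine ⟨(u.i : ℤ) * 2 ^ (max u.k t.k - u.k) - (t.i : ℤ) * 2 ^ (max u.k t.k - t.k), ?_⟩
  unfold X
  rw [shiftQ u.i u.k (max u.k t.k) (le_max_left _ _),
    shiftQ t.i t.k (max u.k t.k) (le_max_right _ _), div_sub_div_same]
  push_cast
  ring_nf

lemma dyadic_diffY (u t : DyadicSquare) :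
    ∃ n : ℤ, Y u - Y t = (n : ℚ) / 2 ^ (max u.k t.k) := by
  refine ⟨(u.j : ℤ) * 2 ^ (max u.k t.k - u.k) - (t.j : ℤ) * 2 ^ (max u.k t.k - t.k), ?_⟩
  unfold Y
  rw [shiftQ u.j u.k (max u.k t.k) (le_max_left _ _),
    shiftQ t.j t.k (max u.k t.k) (le_max_right _ _), div_sub_div_same]
  push_cast
  ring_nf

lemma div_pow_eq_mul_W (n : ℤ) (a : ℕ) (s : DyadicSquare) (h : s.k = a) :
    (n : ℚ) / 2 ^ a = (n : ℚ) * W s := by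
  subst h; unfold W; ring

/-- C2 : a neighbour on the west side of the maximal square `T`, not aligned with
`T`'s top or bottom lines, has its bottom at or below `T`'s bottom. -/
lemma C2 (T u : DyadicSquare) (hS : Sm u ≤ Sm T) (hK : Sm u = Sm T → u.k ≤ T.k)
    (ht : Touch u T) (hxr : X u + W u = X T) (hbne : Y u ≠ Y T + W T) :
    Y u ≤ Y T := by
  by_contra hcon
  push_neg at hcon
  have hlt : Y u < Y T + W T := lt_of_le_of_ne ht.2.2.1 hbne
  rcases le_or_gt u.k T.k with hk | hk
  · obtain ⟨n, hn⟩ := dyadic_diffY u T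
    rw [max_eq_right hk] at hn
    exact no_dyadic_between (q := Y u - Y T) (g := W T) n
      (by rw [hn]; exact div_pow_eq_mul_W n T.k T rfl)
      (W_pos T) (by linarith) (by linarith)
  · have hSlt : Sm u < Sm T := by
      rcases lt_or_eq_of_le hS with h' | h'
      · exact h'
      · exact absurd (hK h') (by omega)
    have : Y u < Y T + W u := by
      have : X u = X T - W u := by linarith
      unfold Sm at hSlt; linarith
    obtain ⟨n, hn⟩ := dyadic_diffY u T
    rw [max_eq_left hk.le] at hn
    exact no_dyadic_between (q := Y u - Y T) (g := W u) n
      (by rw [hn]; exact div_pow_eq_mul_W n u.k u rfl)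
      (W_pos u) (by linarith) (by linarith)

/-- C4 : mirrored version of C2 for squares below `T`. -/
lemma C4 (T u : DyadicSquare) (hS : Sm u ≤ Sm T) (hK : Sm u = Sm T → u.k ≤ T.k)
    (ht : Touch u T) (hyt : Y u + W u = Y T) (hxne : X u ≠ X T + W T) :
    X u ≤ X T := by
  by_contra hcon
  push_neg at hcon
  have hlt : X u < X T + W T := lt_of_le_of_ne ht.1 hxne
  rcases le_or_gt u.k T.k with hk | hk
  · obtain ⟨n, hn⟩ := dyadic_diffX u T
    rw [max_eq_right hk] at hn
    exact no_dyadic_between (q := X u - X T) (g := W T) n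
      (by rw [hn]; exact div_pow_eq_mul_W n T.k T rfl)
      (W_pos T) (by linarith) (by linarith)
  · have hSlt : Sm u < Sm T := by
      rcases lt_or_eq_of_le hS with h' | h'
      · exact h'
      · exact absurd (hK h') (by omega)
    have : X u < X T + W u := by
      have : Y u = Y T - W u := by linarith
      unfold Sm at hSlt; linarith
    obtain ⟨n, hn⟩ := dyadic_diffX u T
    rw [max_eq_left hk.le] at hn
    exact no_dyadic_between (q := X u - X T) (g := W u) n
      (by rw [hn]; exact div_pow_eq_mul_W n u.k u rfl)
      (W_pos u) (by linarith) (by linarith)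

/-- C3 : a neighbour east of `T` has its bottom at distance at least `W T`
below `T`'s bottom. -/
lemma C3 (T u : DyadicSquare) (hS : Sm u ≤ Sm T) (hxl : X u = X T + W T) :
    Y u ≤ Y T - W T := by
  unfold Sm at hS; linarith

/-- C5 : a neighbour north of `T` starts at distance at least `W T`
to the west. -/
lemma C5 (T u : DyadicSquare) (hS : Sm u ≤ Sm T) (hyb : Y u = Y T + W T) :
    X u ≤ X T - W T := by
  unfold Sm at hS; linarith

/-- C1 : coverage: a touching, non-overlapping square lies on one of the four
boundary lines of `T`. -/
lemma C1 (T u : DyadicSquare) (ht : Touch u T) (hnov : ¬ Ov u T) :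
    X u + W u = X T ∨ X u = X T + W T ∨ Y u + W u = Y T ∨ Y u = Y T + W T := by
  obtain ⟨h1, h2, h3, h4⟩ := ht
  unfold Ov at hnov
  by_contra hcon
  push_neg at hcon
  obtain ⟨e1, e2, e3, e4⟩ := hcon
  exact hnov ⟨lt_of_le_of_ne h1 e2, lt_of_le_of_ne h2 (fun h => e1 (h.symm)),
    lt_of_le_of_ne h3 e4, lt_of_le_of_ne h4 (fun h => e3 (h.symm))⟩

end QTC
end Part2

section Part3
namespace QTC
open DyadicSquare

lemma touch_symm {s t : DyadicSquare} (h : Touch s t) : Touch t s :=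
  ⟨h.2.1, h.1, h.2.2.2, h.2.2.1⟩

/-- slot classification of a neighbour `u` of the extremal square `T`. -/
def slot (T u : DyadicSquare) : Fin 5 :=
  if X u + W u = X T then
    (if Y u + W u = Y T then 0 else if Y u = Y T + W T then 4 else 1)
  else if X u = X T + W T then 2
  else if Y u + W u = Y T then 3
  else 4

def P0 (T u : DyadicSquare) : Prop := X u + W u = X T ∧ Y u + W u = Y T
def P1 (T u : DyadicSquare) : Prop := X u + W u = X T ∧ Y u ≤ Y T ∧ Y T < Y u + W u
def P2 (T u : DyadicSquare) : Prop := X u = X T + W T ∧ Y u ≤ Y T - W T ∧ Y T ≤ Y u + W u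
def P3 (T u : DyadicSquare) : Prop := Y u + W u = Y T ∧ X u ≤ X T ∧ X T < X u + W u
def P4 (T u : DyadicSquare) : Prop := Y u = Y T + W T ∧ X u < X T ∧ X T ≤ X u + W u

lemma slot_spec (T u : DyadicSquare)
    (hS : Sm u ≤ Sm T) (hK : Sm u = Sm T → u.k ≤ T.k)
    (ht : Touch u T) (hn : ¬ Ov u T) :
    (slot T u = 0 ∧ P0 T u) ∨ (slot T u = 1 ∧ P1 T u) ∨ (slot T u = 2 ∧ P2 T u) ∨
      (slot T u = 3 ∧ P3 T u) ∨ (slot T u = 4 ∧ P4 T u) := by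
  have wu := W_pos u; have wT := W_pos T
  obtain ⟨t1, t2, t3, t4⟩ := ht
  unfold slot
  split_ifs with h1 h2 h3 h4 h5
  · exact Or.inl ⟨rfl, h1, h2⟩
  · refine Or.inr (Or.inr (Or.inr (Or.inr ⟨rfl, h3, by linarith, by linarith⟩)))
  · refine Or.inr (Or.inl ⟨rfl, h1,
      C2 T u hS hK ⟨t1, t2, t3, t4⟩ h1 h3, lt_of_le_of_ne t4 (fun h => h2 h.symm)⟩)
  · exact Or.inr (Or.inr (Or.inl ⟨rfl, h4, C3 T u hS h4, t4⟩))
  · refine Or.inr (Or.inr (Or.inr (Or.inl ⟨rfl, h5,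
      C4 T u hS hK ⟨t1, t2, t3, t4⟩ h5 h4, lt_of_le_of_ne t2 (fun h => h1 h.symm)⟩)))
  · have hbot : Y u = Y T + W T := by
      rcases C1 T u ⟨t1, t2, t3, t4⟩ hn with h | h | h | h
      · exact absurd h h1
      · exact absurd h h4
      · exact absurd h h5
      · exact h
    refine Or.inr (Or.inr (Or.inr (Or.inr ⟨rfl, hbot, ?_, lt_of_le_of_ne t2 (fun h => h1 h.symm) |>.le⟩)))
    have := C5 T u hS hbot
    linarith

/-- two distinct neighbours of the extremal square `T` in the same slot overlap. -/
lemma slot_overlap (T u v : DyadicSquare)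
    (hSu : Sm u ≤ Sm T) (hKu : Sm u = Sm T → u.k ≤ T.k)
    (htu : Touch u T) (hnu : ¬ Ov u T)
    (hSv : Sm v ≤ Sm T) (hKv : Sm v = Sm T → v.k ≤ T.k)
    (htv : Touch v T) (hnv : ¬ Ov v T)
    (hslot : slot T u = slot T v) : Ov u v := by
  have wu := W_pos u; have wv := W_pos v; have wT := W_pos T
  have htu' := htu; have htv' := htv
  obtain ⟨tu1, tu2, tu3, tu4⟩ := htu'
  obtain ⟨tv1, tv2, tv3, tv4⟩ := htv'
  rcases slot_spec T u hSu hKu htu hnu with ⟨hu, pu⟩ | ⟨hu, pu⟩ | ⟨hu, pu⟩ | ⟨hu, pu⟩ | ⟨hu, pu⟩ <;>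
    rcases slot_spec T v hSv hKv htv hnv with ⟨hv, pv⟩ | ⟨hv, pv⟩ | ⟨hv, pv⟩ | ⟨hv, pv⟩ | ⟨hv, pv⟩ <;>
      (try (rw [hu, hv] at hslot; exact absurd hslot (by decide))) <;>
      [skip; skip; skip; skip; skip]
  · obtain ⟨a1, a2⟩ := pu; obtain ⟨b1, b2⟩ := pv
    exact ⟨by linarith, by linarith, by linarith, by linarith⟩
  · obtain ⟨a1, a2, a3⟩ := pu; obtain ⟨b1, b2, b3⟩ := pv
    exact ⟨by linarith, by linarith, by linarith, by linarith⟩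
  · obtain ⟨a1, a2, a3⟩ := pu; obtain ⟨b1, b2, b3⟩ := pv
    exact ⟨by linarith, by linarith, by linarith, by linarith⟩
  · obtain ⟨a1, a2, a3⟩ := pu; obtain ⟨b1, b2, b3⟩ := pv
    exact ⟨by linarith, by linarith, by linarith, by linarith⟩
  · obtain ⟨a1, a2, a3⟩ := pu; obtain ⟨b1, b2, b3⟩ := pv
    exact ⟨by linarith, by linarith, by linarith, by linarith⟩

end QTC
end Part3

section Part4
namespace QTC
open DyadicSquare

/-- In any nonempty family with pairwise disjoint interiors there is a square
touching at most 5 of the others. -/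
lemma exists_low_degree (F : Finset DyadicSquare) (hF : F.Nonempty)
    (hdisj : ∀ u ∈ F, ∀ v ∈ F, u ≠ v → ¬ Ov u v) :
    ∃ T ∈ F, ((F.erase T).filter (fun u => Touch u T)).card ≤ 5 := by
  obtain ⟨T0, hT0, hmax0⟩ := F.exists_max_image Sm hF
  set F1 := F.filter (fun s => Sm s = Sm T0) with hF1
  have hT0m : T0 ∈ F1 := by simp [hF1, hT0]
  obtain ⟨T, hT1, hmax1⟩ := F1.exists_max_image (fun s => s.k) ⟨T0, hT0m⟩
  have hTF : T ∈ F := (Finset.mem_filter.mp hT1).1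
  have hTS : Sm T = Sm T0 := (Finset.mem_filter.mp hT1).2
  have hS : ∀ u ∈ F, Sm u ≤ Sm T := fun u hu => hTS ▸ hmax0 u hu
  have hK : ∀ u ∈ F, Sm u = Sm T → u.k ≤ T.k := by
    intro u hu hSu
    exact hmax1 u (by simp [hF1, hu, hSu, hTS])
  refine ⟨T, hTF, ?_⟩
  have h5 : ((F.erase T).filter (fun u => Touch u T)).card ≤
      (Finset.univ : Finset (Fin 5)).card := by
    apply Finset.card_le_card_of_injOn (slot T)
    · intro a _; exact Finset.mem_univ _
    · intro a ha b hb hab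
      simp only [Finset.coe_filter, Set.mem_setOf_eq, Finset.mem_erase] at ha hb
      obtain ⟨⟨hane, haF⟩, hat⟩ := ha
      obtain ⟨⟨hbne, hbF⟩, hbt⟩ := hb
      by_contra hne
      exact hdisj a haF b hbF hne
        (slot_overlap T a b (hS a haF) (hK a haF) hat (hdisj a haF T hTF hane)
          (hS b hbF) (hK b hbF) hbt (hdisj b hbF T hTF hbne) hab)
  simpa using h5

/-- greedy 6-colouring of any family with pairwise disjoint interiors. -/
lemma colorable (F : Finset DyadicSquare)
    (hdisj : ∀ u ∈ F, ∀ v ∈ F, u ≠ v → ¬ Ov u v) :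
    ∃ f : DyadicSquare → Fin 6,
      ∀ s ∈ F, ∀ t ∈ F, s ≠ t → Touch s t → f s ≠ f t := by
  induction F using Finset.strongInduction with
  | _ F ih =>
    rcases F.eq_empty_or_nonempty with rfl | hF
    · exact ⟨fun _ => 0, by simp⟩
    obtain ⟨T, hT, hdeg⟩ := exists_low_degree F hF hdisj
    have hsub : F.erase T ⊂ F := Finset.erase_ssubset hT
    obtain ⟨f', hf'⟩ := ih (F.erase T) hsub
      (fun u hu v hv huv => hdisj u (Finset.mem_of_mem_erase hu)
        v (Finset.mem_of_mem_erase hv) huv)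
    set nbrs := (F.erase T).filter (fun u => Touch u T) with hnbrs
    have himg : (nbrs.image f').card ≤ 5 := le_trans Finset.card_image_le hdeg
    have hex : ∃ c : Fin 6, c ∉ nbrs.image f' := by
      by_contra h
      push_neg at h
      have hsub6 : (Finset.univ : Finset (Fin 6)) ⊆ nbrs.image f' := fun c _ => h c
      have := Finset.card_le_card hsub6
      simp [Finset.card_univ] at this
      omega
    obtain ⟨c, hc⟩ := hex
    refine ⟨fun x => if x = T then c else f' x, ?_⟩
    intro s hs t ht hst htouch
    by_cases hsT : s = T <;> by_cases htT : t = T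
    · exact absurd (hsT.trans htT.symm) hst
    · intro h
      simp only [if_pos hsT, if_neg htT] at h
      apply hc
      rw [h]
      refine Finset.mem_image_of_mem f' (Finset.mem_filter.mpr
        ⟨Finset.mem_erase.mpr ⟨htT, ht⟩, ?_⟩)
      · exact hsT ▸ touch_symm htouch
    · intro h
      simp only [if_pos htT, if_neg hsT] at h
      apply hc
      rw [← h]
      refine Finset.mem_image_of_mem f' (Finset.mem_filter.mpr
        ⟨Finset.mem_erase.mpr ⟨hsT, hs⟩, ?_⟩)
      · exact htT ▸ htouch
    · simp only [if_neg hsT, if_neg htT]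
      exact hf' s (Finset.mem_erase.mpr ⟨hsT, hs⟩) t (Finset.mem_erase.mpr ⟨htT, ht⟩)
        hst htouch

end QTC
end Part4

/-- Every quadtree can be properly 6-colored under corner adjacency. -/
theorem quadtree_six_colorable_corner (Q : Finset DyadicSquare)
    (hQ : IsQuadtree Q) :
    ∃ f : DyadicSquare → Fin 6,
      ∀ s ∈ Q, ∀ t ∈ Q, DyadicSquare.CornerAdj s t → f s ≠ f t := by
  have hdisj : ∀ u ∈ Q, ∀ v ∈ Q, u ≠ v → ¬ QTC.Ov u v := by
    intro u hu v hv huv hov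
    have h := hQ.1 (Finset.mem_coe.mpr hu) (Finset.mem_coe.mpr hv) huv
    rw [← QTC.ov_iff] at hov
    rw [h] at hov
    exact Set.not_nonempty_empty hov
  obtain ⟨f, hf⟩ := QTC.colorable Q hdisj
  exact ⟨f, fun s hs t ht hadj =>
    hf s hs t ht hadj.1 ((QTC.touch_iff s t).mp hadj.2)⟩
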